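/- arXiv:2012.00159 — 5 statements merged into one kernel-verified Lean document; each statement's English description precedes it below -/
import Mathlib

section
/- Let d, k, n be positive integers with d ≤ kn, let U be any unitary matrix in M_{kn}(ℂ), let P be the canonical injection ℂ^d → ℂ^{kn}, and let Φ(X) = (id_k ⊗ tr_n)(U P X P* U*). Let K be a nonempty convex compact subset of D_k and let ε > 0. If for every A ∈ D_k one has ‖P* U* (A ⊗ I_n) U P‖ ≤ max_{X ∈ K} tr(XA) + ε/k, then Φ(D_d) ⊆ K + ε, where K + ε = { Y ∈ D_k : ∃ X ∈ K, ‖X − Y‖₂ ≤ ε }. -/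
open scoped Kronecker ComplexOrder
open MeasureTheory Matrix

noncomputable section

/-- Density matrices: positive semidefinite with trace 1. -/
def IsDensity {m : Type*} [Fintype m] (X : Matrix m m ℂ) : Prop :=
  X.PosSemidef ∧ X.trace = 1

/-- Operator norm of a square complex matrix. -/
noncomputable def opNorm {m : Type*} [Fintype m] [DecidableEq m] (M : Matrix m m ℂ) : ℝ :=
  ‖(Matrix.toEuclideanCLM (𝕜 := ℂ) M : EuclideanSpace ℂ m →L[ℂ] EuclideanSpace ℂ m)‖

/-- Frobenius (Hilbert-Schmidt) norm of a matrix. -/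
noncomputable def frob {m p : Type*} [Fintype m] [Fintype p] (M : Matrix m p ℂ) : ℝ :=
  Real.sqrt (Matrix.trace (Mᴴ * M)).re

/-- Partial trace over the second tensor factor. -/
def ptrace {k n : ℕ} (M : Matrix (Fin k × Fin n) (Fin k × Fin n) ℂ) :
    Matrix (Fin k) (Fin k) ℂ :=
  Matrix.of fun i j => ∑ a : Fin n, M (i, a) (j, a)

/-- The canonical injection ℂ^d → ℂ^{kn}, as a kn × d matrix with ones on the
diagonal and zeros elsewhere. -/
def inj (k n d : ℕ) : Matrix (Fin k × Fin n) (Fin d) ℂ :=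
  Matrix.of fun p l => if (finProdFinEquiv p : ℕ) = (l : ℕ) then 1 else 0

/-- The quantum channel X ↦ (id_k ⊗ tr_n)(U P X P* U*). -/
def channel (k n d : ℕ) (U : Matrix (Fin k × Fin n) (Fin k × Fin n) ℂ)
    (X : Matrix (Fin d) (Fin d) ℂ) : Matrix (Fin k) (Fin k) ℂ :=
  ptrace (U * (inj k n d * X * (inj k n d)ᴴ) * Uᴴ)

/-- The operator norm ‖P* U* (A ⊗ I_n) U P‖. -/
noncomputable def outNorm (k n d : ℕ) (U : Matrix (Fin k × Fin n) (Fin k × Fin n) ℂ)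
    (A : Matrix (Fin k) (Fin k) ℂ) : ℝ :=
  opNorm ((inj k n d)ᴴ * Uᴴ * (A ⊗ₖ (1 : Matrix (Fin n) (Fin n) ℂ)) * U * inj k n d)

instance matrixMeasurableSpace {m p : Type*} : MeasurableSpace (Matrix m p ℂ) :=
  show MeasurableSpace (m → p → ℂ) from inferInstance

/-- `μ` is the Haar probability measure on the unitary group, viewed as a measure on
matrix space: a probability measure giving full mass to the unitary group and invariant
under left translation by unitaries. -/
def IsHaarUnitary {m : Type*} [Fintype m] [DecidableEq m]
    (μ : Measure (Matrix m m ℂ)) : Prop :=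
  IsProbabilityMeasure μ ∧ μ (Matrix.unitaryGroup m ℂ : Set (Matrix m m ℂ)) = 1 ∧
    ∀ V ∈ Matrix.unitaryGroup m ℂ, Measure.map (fun W => V * W) μ = μ

/-- Von Neumann entropy of a (Hermitian) matrix, via its eigenvalues,
with the convention 0 ln 0 = 0. -/
noncomputable def vnEntropy {m : Type*} [Fintype m] [DecidableEq m]
    (X : Matrix m m ℂ) : ℝ :=
  if h : X.IsHermitian then -∑ i, h.eigenvalues i * Real.log (h.eigenvalues i) else 0

end

/-- Support function of a set of matrices: `max_{X ∈ K} tr(XA)`. -/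
noncomputable def suppFn {k : ℕ} (K : Set (Matrix (Fin k) (Fin k) ℂ))
    (A : Matrix (Fin k) (Fin k) ℂ) : ℝ :=
  sSup ((fun X => (Matrix.trace (X * A)).re) '' K)

/-!
Let `Y = Φ(X)`, let `X₀` be the point of `K` nearest to `Y` in the Frobenius norm and
`δ = ‖Y - X₀‖₂`. If `δ > 0`, then `B = Y - X₀` is Hermitian and traceless with
`‖B‖ ≤ ‖B‖₂ = δ`, so `A = (B + δ I) / (k δ)` is a density matrix. The obtuse-angle
characterisation of the projection gives `tr ((Y - X) A) ≥ δ / k` for every `X ∈ K`, so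
`tr (Y A) ≥ max_K tr (X A) + δ / k`. On the other hand
`tr (Y A) = tr (X P* U* (A ⊗ I) U P) ≤ ‖P* U* (A ⊗ I) U P‖`, and the hypothesis
forces `δ ≤ ε`.
-/

open Matrix

section Frobenius

variable {m n : Type*} [Fintype m] [Fintype n]

def toFrobeniusL2 : Matrix m n ℂ →ₗ[ℂ] EuclideanSpace ℂ (n × m) where
  toFun C := WithLp.toLp 2 C.vec
  map_add' _ _ := rfl
  map_smul' _ _ := rfl

lemma inner_toFrobeniusL2 (C D : Matrix m n ℂ) :
    inner ℂ (toFrobeniusL2 C) (toFrobeniusL2 D) = (Cᴴ * D).trace := by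
  rw [EuclideanSpace.inner_eq_star_dotProduct, dotProduct_comm]
  exact star_vec_dotProduct_vec C D

lemma norm_toFrobeniusL2 (C : Matrix m n ℂ) : ‖toFrobeniusL2 C‖ = frob C := by
  rw [frob, norm_eq_sqrt_re_inner (𝕜 := ℂ), inner_toFrobeniusL2]
  rfl

lemma frob_nonneg (C : Matrix m n ℂ) : 0 ≤ frob C := Real.sqrt_nonneg _

open scoped Matrix.Norms.Frobenius in
lemma frob_eq_frobenius_norm (C : Matrix m n ℂ) : frob C = ‖C‖ := by
  rw [← norm_toFrobeniusL2, EuclideanSpace.norm_eq, frobenius_norm_def, Real.sqrt_eq_rpow,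
    Fintype.sum_prod_type, Finset.sum_comm]
  simp_rw [Real.rpow_two]
  rfl

open scoped Matrix.Norms.Frobenius in
lemma norm_mulVec_le_frob (A : Matrix m n ℂ) (x : n → ℂ) :
    ‖WithLp.toLp 2 (A *ᵥ x)‖ ≤ frob A * ‖WithLp.toLp 2 x‖ := by
  rw [← frobenius_norm_replicateCol (ι := Unit), replicateCol_mulVec,
    ← frobenius_norm_replicateCol (ι := Unit), frob_eq_frobenius_norm]
  exact frobenius_norm_mul _ _

lemma opNorm_le_frob [DecidableEq m] (A : Matrix m m ℂ) : opNorm A ≤ frob A :=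
  ContinuousLinearMap.opNorm_le_bound _ (frob_nonneg A) fun x => by
    simpa [← toEuclideanCLM_toLp] using norm_mulVec_le_frob A x.ofLp

lemma frob_sub_comm (C D : Matrix m n ℂ) : frob (C - D) = frob (D - C) := by
  rw [← norm_toFrobeniusL2, ← norm_toFrobeniusL2, map_sub, map_sub, norm_sub_rev]

/-- `X₀` is the Frobenius-nearest point of `K` to `Y`, in the form of the obtuse-angle
criterion `re ⟪Y - X₀, X - X₀⟫ ≤ 0`. -/
lemma exists_frob_projection {K : Set (Matrix m n ℂ)} (hne : K.Nonempty) (hconv : Convex ℝ K)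
    (hcomp : IsCompact K) (Y : Matrix m n ℂ) :
    ∃ X₀ ∈ K, ∀ X ∈ K, frob (Y - X₀) ^ 2 ≤ ((Y - X)ᴴ * (Y - X₀)).trace.re := by
  let _ := InnerProductSpace.complexToReal (G := EuclideanSpace ℂ (n × m))
  let L := (toFrobeniusL2 (m := m) (n := n)).restrictScalars ℝ
  have hinner (C D : Matrix m n ℂ) : ((Cᴴ * D).trace).re = inner ℝ (L C) (L D) := by
    rw [real_inner_eq_re_inner ℂ, LinearMap.restrictScalars_apply,
      LinearMap.restrictScalars_apply, inner_toFrobeniusL2]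
    rfl
  obtain ⟨_, ⟨X₀, hX₀, rfl⟩, hmin⟩ :=
    exists_norm_eq_iInf_of_complete_convex (hne.image L)
      (hcomp.image L.continuous_of_finiteDimensional).isComplete (hconv.linear_image L) (L Y)
  have hobtuse :=
    (norm_eq_iInf_iff_real_inner_le_zero (hconv.linear_image L) ⟨X₀, hX₀, rfl⟩).mp hmin
  refine ⟨X₀, hX₀, fun X hX => ?_⟩
  have hangle := hobtuse _ ⟨X, hX, rfl⟩
  rw [hinner, ← norm_toFrobeniusL2, ← LinearMap.restrictScalars_apply ℝ,
    show Y - X = (Y - X₀) - (X - X₀) by abel]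
  simp only [map_sub] at hangle ⊢
  rw [inner_sub_left, real_inner_self_eq_norm_sq, real_inner_comm]
  linarith

end Frobenius

section Order

variable {m : Type*} [Fintype m] [DecidableEq m]

open scoped MatrixOrder

lemma Matrix.PosSemidef.trace_mul_nonneg {A B : Matrix m m ℂ} (hA : A.PosSemidef)
    (hB : B.PosSemidef) : 0 ≤ (A * B).trace := by
  obtain ⟨C, rfl⟩ := CStarAlgebra.nonneg_iff_eq_star_mul_self.mp hB.nonneg
  rw [← Matrix.mul_assoc, trace_mul_cycle]
  exact (hA.mul_mul_conjTranspose_same C).trace_nonneg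

open scoped Matrix.Norms.L2Operator in
lemma Matrix.IsHermitian.posSemidef_opNorm_smul_one_sub {N : Matrix m m ℂ}
    (hN : N.IsHermitian) : (opNorm N • (1 : Matrix m m ℂ) - N).PosSemidef := by
  rw [← Algebra.algebraMap_eq_smul_one]
  exact le_iff.mp (IsSelfAdjoint.le_algebraMap_norm_self hN.isSelfAdjoint)

open scoped Matrix.Norms.L2Operator in
lemma Matrix.IsHermitian.posSemidef_add_frob_smul_one {B : Matrix m m ℂ} (hB : B.IsHermitian) :
    (B + frob B • (1 : Matrix m m ℂ)).PosSemidef := by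
  have h : -(opNorm B • (1 : Matrix m m ℂ)) ≤ B := by
    rw [← Algebra.algebraMap_eq_smul_one]
    exact IsSelfAdjoint.neg_algebraMap_norm_le_self hB.isSelfAdjoint
  have h' : -(frob B • (1 : Matrix m m ℂ)) ≤ -(opNorm B • (1 : Matrix m m ℂ)) := by
    rw [neg_le_neg_iff, ← sub_nonneg, ← sub_smul]
    exact smul_nonneg (sub_nonneg.mpr (opNorm_le_frob B)) zero_le_one
  simpa [le_iff] using h'.trans h

lemma Matrix.PosSemidef.re_trace_mul_le_opNorm {X N : Matrix m m ℂ} (hX : X.PosSemidef)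
    (hN : N.IsHermitian) : (X * N).trace.re ≤ opNorm N * X.trace.re := by
  have h := (hX.trace_mul_nonneg hN.posSemidef_opNorm_smul_one_sub).1
  simpa [mul_sub, trace_sub, trace_smul] using h

end Order

section PartialTrace

variable {k n : ℕ}

lemma ptrace_eq_sum_submatrix (M : Matrix (Fin k × Fin n) (Fin k × Fin n) ℂ) :
    ptrace M = ∑ a, M.submatrix (·, a) (·, a) := by
  ext i j
  simp [ptrace, Matrix.sum_apply]

lemma Matrix.PosSemidef.ptrace {M : Matrix (Fin k × Fin n) (Fin k × Fin n) ℂ}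
    (hM : M.PosSemidef) : (ptrace M).PosSemidef := by
  rw [ptrace_eq_sum_submatrix]
  exact posSemidef_sum _ fun a _ => hM.submatrix _

lemma trace_ptrace_mul (M : Matrix (Fin k × Fin n) (Fin k × Fin n) ℂ)
    (A : Matrix (Fin k) (Fin k) ℂ) :
    (ptrace M * A).trace = (M * (A ⊗ₖ (1 : Matrix (Fin n) (Fin n) ℂ))).trace := by
  simp only [trace, diag_apply, mul_apply, ptrace, of_apply, kroneckerMap_apply, one_apply,
    Fintype.sum_prod_type, Finset.sum_mul, mul_ite, mul_one, mul_zero, Finset.sum_ite_eq',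
    Finset.mem_univ, if_true]
  exact Finset.sum_congr rfl fun i _ => Finset.sum_comm

lemma trace_ptrace (M : Matrix (Fin k × Fin n) (Fin k × Fin n) ℂ) :
    (ptrace M).trace = M.trace := by
  simpa using trace_ptrace_mul M 1

variable {d : Type*} [Fintype d] {W : Matrix (Fin k × Fin n) d ℂ}

lemma IsDensity.ptrace_conj [DecidableEq d] (hW : Wᴴ * W = 1) {X : Matrix d d ℂ}
    (hX : IsDensity X) : IsDensity (ptrace (W * X * Wᴴ)) := by
  refine ⟨(hX.1.mul_mul_conjTranspose_same W).ptrace, ?_⟩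
  rw [trace_ptrace, trace_mul_cycle, hW, Matrix.one_mul, hX.2]

lemma trace_ptrace_conj_mul (X : Matrix d d ℂ) (A : Matrix (Fin k) (Fin k) ℂ) :
    (ptrace (W * X * Wᴴ) * A).trace
      = (X * (Wᴴ * (A ⊗ₖ (1 : Matrix (Fin n) (Fin n) ℂ)) * W)).trace := by
  rw [trace_ptrace_mul, Matrix.mul_assoc, Matrix.mul_assoc, trace_mul_comm]
  simp only [Matrix.mul_assoc]

end PartialTrace

section Channel

variable {k n d : ℕ}

lemma inj_eq_submatrix (hdkn : d ≤ k * n) :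
    inj k n d = (1 : Matrix (Fin (k * n)) (Fin (k * n)) ℂ).submatrix finProdFinEquiv
      (Fin.castLE hdkn) := by
  ext p l
  simp [inj, one_apply, Fin.ext_iff]

lemma conjTranspose_inj_mul_inj (hdkn : d ≤ k * n) : (inj k n d)ᴴ * inj k n d = 1 := by
  rw [inj_eq_submatrix hdkn, conjTranspose_submatrix, conjTranspose_one,
    ← submatrix_mul _ _ _ _ _ finProdFinEquiv.bijective, Matrix.mul_one]
  exact submatrix_one_embedding (Fin.castLEEmb hdkn)

lemma channel_eq_ptrace (U : Matrix (Fin k × Fin n) (Fin k × Fin n) ℂ)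
    (X : Matrix (Fin d) (Fin d) ℂ) :
    channel k n d U X = ptrace (U * inj k n d * X * (U * inj k n d)ᴴ) := by
  simp only [channel, conjTranspose_mul, Matrix.mul_assoc]

lemma re_trace_channel_mul_le_outNorm {U : Matrix (Fin k × Fin n) (Fin k × Fin n) ℂ}
    {X : Matrix (Fin d) (Fin d) ℂ} (hX : IsDensity X) {A : Matrix (Fin k) (Fin k) ℂ}
    (hA : A.IsHermitian) : (channel k n d U X * A).trace.re ≤ outNorm k n d U A := by
  have hAI : (A ⊗ₖ (1 : Matrix (Fin n) (Fin n) ℂ)).IsHermitian := by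
    rw [IsHermitian, conjTranspose_kronecker, hA.eq, conjTranspose_one]
  have h := hX.1.re_trace_mul_le_opNorm (isHermitian_conjTranspose_mul_mul (U * inj k n d) hAI)
  rw [hX.2, Complex.one_re, mul_one] at h
  rw [channel_eq_ptrace, trace_ptrace_conj_mul]
  simpa only [outNorm, conjTranspose_mul, Matrix.mul_assoc] using h

end Channel

section Density

variable {m : Type*} [Fintype m]

lemma IsDensity.nonempty {X : Matrix m m ℂ} (hX : IsDensity X) : Nonempty m := by
  by_contra h
  rw [not_nonempty_iff] at h
  simpa [trace] using hX.2

variable [DecidableEq m]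

lemma Matrix.IsHermitian.isDensity_smul_add_frob_smul_one [Nonempty m] {B : Matrix m m ℂ}
    (hB : B.IsHermitian) (htr : B.trace = 0) (hpos : 0 < frob B) :
    IsDensity ((Fintype.card m * frob B)⁻¹ • (B + frob B • (1 : Matrix m m ℂ))) := by
  refine ⟨hB.posSemidef_add_frob_smul_one.smul (by positivity), ?_⟩
  have hcard : (Fintype.card m : ℝ) ≠ 0 := by positivity
  rw [trace_smul, trace_add, trace_smul, trace_one, htr, zero_add, smul_smul, Complex.real_smul]
  push_cast
  field_simp

theorem exists_frob_le_of_forall_isDensity {K : Set (Matrix m m ℂ)} (hne : K.Nonempty)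
    (hconv : Convex ℝ K) (hcomp : IsCompact K) (hKD : K ⊆ {X | IsDensity X})
    {Y : Matrix m m ℂ} (hY : IsDensity Y) {ε : ℝ} (hε : 0 ≤ ε)
    (h : ∀ A, IsDensity A →
      (Y * A).trace.re ≤ sSup ((fun X => (X * A).trace.re) '' K) + ε / Fintype.card m) :
    ∃ X ∈ K, frob (X - Y) ≤ ε := by
  obtain ⟨X₀, hX₀, hproj⟩ := exists_frob_projection hne hconv hcomp Y
  refine ⟨X₀, hX₀, ?_⟩
  rw [frob_sub_comm]
  set B := Y - X₀
  set δ := frob B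
  rcases (frob_nonneg B).eq_or_lt with hδ | hδ
  · linarith
  have : Nonempty m := hY.nonempty
  have hcard : (0 : ℝ) < Fintype.card m := by positivity
  have hdiff : ∀ {X}, X ∈ K → (Y - X).IsHermitian ∧ (Y - X).trace = 0 := fun hX =>
    ⟨hY.1.1.sub (hKD hX).1.1, by rw [trace_sub, hY.2, (hKD hX).2, sub_self]⟩
  set A := (Fintype.card m * δ)⁻¹ • (B + δ • (1 : Matrix m m ℂ))
  have hA : IsDensity A := (hdiff hX₀).1.isDensity_smul_add_frob_smul_one (hdiff hX₀).2 hδ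
  have hsep : ∀ X ∈ K, (X * A).trace.re + δ / Fintype.card m ≤ (Y * A).trace.re := by
    intro X hX
    have hYX : ((Y - X) * A).trace.re = (Fintype.card m * δ)⁻¹ * ((Y - X)ᴴ * B).trace.re := by
      simp [A, (hdiff hX).1.eq, mul_add, trace_add, trace_smul, (hdiff hX).2]
    have hsub : (Y * A).trace.re - (X * A).trace.re = ((Y - X) * A).trace.re := by
      rw [sub_mul, trace_sub, Complex.sub_re]
    have hc : (Fintype.card m * δ)⁻¹ * δ ^ 2 = δ / Fintype.card m := by
      field_simp
    calc (X * A).trace.re + δ / Fintype.card m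
        = (X * A).trace.re + (Fintype.card m * δ)⁻¹ * δ ^ 2 := by rw [hc]
      _ ≤ (X * A).trace.re + (Fintype.card m * δ)⁻¹ * ((Y - X)ᴴ * B).trace.re := by
        gcongr
        exact hproj X hX
      _ = (Y * A).trace.re := by rw [← hYX, ← hsub]; ring
  have hsup : sSup ((fun X => (X * A).trace.re) '' K) ≤ (Y * A).trace.re - δ / Fintype.card m :=
    csSup_le (hne.image _) fun _ ⟨X, hX, hXA⟩ => hXA ▸ le_sub_iff_add_le.mpr (hsep X hX)
  have hA_le := h A hA
  have : δ / Fintype.card m ≤ ε / Fintype.card m := by linarith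
  exact (div_le_div_iff_of_pos_right hcard).mp this

end Density

theorem stmt3_general (d k n : ℕ) (hdkn : d ≤ k * n)
    (U : Matrix (Fin k × Fin n) (Fin k × Fin n) ℂ)
    (hU : U ∈ Matrix.unitaryGroup (Fin k × Fin n) ℂ)
    (K : Set (Matrix (Fin k) (Fin k) ℂ)) (hKne : K.Nonempty) (hKconv : Convex ℝ K)
    (hKcomp : IsCompact K) (hKD : K ⊆ {X | IsDensity X})
    (ε : ℝ) (hε : 0 < ε)
    (hyp : ∀ A : Matrix (Fin k) (Fin k) ℂ, IsDensity A →
      outNorm k n d U A ≤ suppFn K A + ε / k) :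
    channel k n d U '' {X | IsDensity X} ⊆
      {Y : Matrix (Fin k) (Fin k) ℂ | IsDensity Y ∧ ∃ X ∈ K, frob (X - Y) ≤ ε} := by
  rintro _ ⟨X, hX, rfl⟩
  have hW : (U * inj k n d)ᴴ * (U * inj k n d) = 1 := by
    have hUU : Uᴴ * U = 1 := hU.1
    rw [conjTranspose_mul, Matrix.mul_assoc, ← Matrix.mul_assoc Uᴴ, hUU, Matrix.one_mul,
      conjTranspose_inj_mul_inj hdkn]
  have hY : IsDensity (channel k n d U X) := channel_eq_ptrace U X ▸ hX.ptrace_conj hW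
  refine ⟨hY,
    exists_frob_le_of_forall_isDensity hKne hKconv hKcomp hKD hY hε.le fun A hA => ?_⟩
  rw [Fintype.card_fin]
  exact (re_trace_channel_mul_le_outNorm hX hA.1.1).trans (hyp A hA)

/-- if `‖P* U* (A ⊗ I_n) U P‖ ≤ max_{X ∈ K} tr(XA) + ε/k` for every density
matrix `A`, then the output set of the channel is contained in the `ε`-fattening of `K`
(with respect to the Frobenius norm) inside the density matrices. -/
theorem stmt3 (d k n : ℕ) (hd : 0 < d) (hk : 0 < k) (hn : 0 < n) (hdkn : d ≤ k * n)
    (U : Matrix (Fin k × Fin n) (Fin k × Fin n) ℂ)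
    (hU : U ∈ Matrix.unitaryGroup (Fin k × Fin n) ℂ)
    (K : Set (Matrix (Fin k) (Fin k) ℂ)) (hKne : K.Nonempty) (hKconv : Convex ℝ K)
    (hKcomp : IsCompact K) (hKD : K ⊆ {X | IsDensity X})
    (ε : ℝ) (hε : 0 < ε)
    (hyp : ∀ A : Matrix (Fin k) (Fin k) ℂ, IsDensity A →
      outNorm k n d U A ≤ suppFn K A + ε / k) :
    channel k n d U '' {X | IsDensity X} ⊆
      {Y : Matrix (Fin k) (Fin k) ℂ | IsDensity Y ∧ ∃ X ∈ K, frob (X - Y) ≤ ε} :=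
  stmt3_general d k n hdkn U hU K hKne hKconv hKcomp hKD ε hε hyp
end

section
/- There exists a function g : ℝ → ℝ of class C⁶ such that g(x) = 0 for all x ≤ 0, g(x) = 1 for all x ≥ 1, g takes values in [0,1] everywhere, and for every integer 0 ≤ j ≤ 6 the supremum norm of the j-th derivative satisfies ‖g⁽ʲ⁾‖_∞ = 2^{j(j+1)/2}. -/
/-!
Let `T g (x) = ∫_{2x-1}^{2x} g`, a moving average of `g (2 ·)` over windows of length `1/2`,
and iterate `T` starting from the ramp `max 0 (min x 1)`.
Differentiating, `(T g)⁽ʲ⁺¹⁾(x) = 2ʲ⁺¹ (g⁽ʲ⁾(2x) - g⁽ʲ⁾(2x - 1))`. For `j ≥ 1` the derivatives of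
a step function from `0` to `1` vanish off `(0, 1)`, so the two terms are never both nonzero
(for `j = 0` use `0 ≤ g ≤ 1`). Hence each application of `T` gains one derivative, the supremum
of `|(T g)⁽ʲ⁺¹⁾|` is `2ʲ⁺¹` times that of `|g⁽ʲ⁾|`, and the point where it is attained moves
from `2⁻ʲ` to `2⁻ʲ⁻¹`.
-/

open Set intervalIntegral

theorem iteratedDeriv_eq_zero_on_closure_of_eqOn_const {𝕜 F : Type*} [NontriviallyNormedField 𝕜]
    [NormedAddCommGroup F] [NormedSpace 𝕜 F] {n : WithTop ℕ∞} {f : 𝕜 → F} {U : Set 𝕜} {c : F}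
    {j : ℕ} (hf : ContDiff 𝕜 n f) (hj₀ : j ≠ 0) (hjn : j ≤ n) (hU : IsOpen U)
    (hfU : EqOn f (fun _ => c) U) : EqOn (iteratedDeriv j f) 0 (closure U) := by
  have hzero : U ⊆ {x | iteratedDeriv j f x = 0} := fun x hx => by
    simp [hfU.iteratedDeriv_of_isOpen hU j hx, iteratedDeriv_const, hj₀]
  exact (isClosed_eq (hf.continuous_iteratedDeriv j hjn) continuous_const).closure_subset_iff.2
    hzero

noncomputable def averageStep (g : ℝ → ℝ) (x : ℝ) : ℝ := ∫ u in (2 * x - 1)..(2 * x), g u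

section averageStep

variable {g : ℝ → ℝ}

theorem hasDerivAt_averageStep (hg : Continuous g) (x : ℝ) :
    HasDerivAt (averageStep g) (2 * (g (2 * x) - g (2 * x - 1))) x := by
  have hF (y : ℝ) : HasDerivAt (fun u => ∫ t in (0 : ℝ)..u, g t) (g y) y :=
    (hg.integral_hasStrictDerivAt 0 y).hasDerivAt
  have hsub : averageStep g =
      fun x => (∫ t in (0 : ℝ)..2 * x, g t) - ∫ t in (0 : ℝ)..2 * x - 1, g t :=
    funext fun x => (integral_interval_sub_left (hg.intervalIntegrable _ _)
      (hg.intervalIntegrable _ _)).symm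
  have h2 : HasDerivAt (fun x : ℝ => 2 * x) 2 x := by simpa using (hasDerivAt_id x).const_mul 2
  rw [hsub]
  exact (((hF _).comp x h2).sub ((hF _).comp x (h2.sub_const 1))).congr_deriv (by ring)

theorem deriv_averageStep (hg : Continuous g) :
    deriv (averageStep g) = fun x => 2 * (g (2 * x) - g (2 * x - 1)) :=
  funext fun x => (hasDerivAt_averageStep hg x).deriv

theorem ContDiff.averageStep {k : ℕ} (hg : ContDiff ℝ k g) :
    ContDiff ℝ (k + 1 : ℕ) (averageStep g) := by
  rw [Nat.cast_succ, contDiff_succ_iff_deriv, deriv_averageStep hg.continuous]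
  exact ⟨fun x => (hasDerivAt_averageStep hg.continuous x).differentiableAt, by simp,
    by fun_prop⟩

theorem iteratedDeriv_succ_averageStep {j : ℕ} (hg : ContDiff ℝ j g) (x : ℝ) :
    iteratedDeriv (j + 1) (averageStep g) x
      = 2 ^ (j + 1) * (iteratedDeriv j g (2 * x) - iteratedDeriv j g (2 * x - 1)) := by
  have hshift : ContDiff ℝ j fun y => g (y - 1) := hg.comp (by fun_prop)
  have hdil : ContDiff ℝ j fun y => g (2 * y) := hg.comp (by fun_prop)
  have hdil' : ContDiff ℝ j fun y => g (2 * y - 1) := hshift.comp (by fun_prop)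
  rw [iteratedDeriv_succ', deriv_averageStep hg.continuous, iteratedDeriv_const_mul_field,
    iteratedDeriv_fun_sub hdil.contDiffAt hdil'.contDiffAt, iteratedDeriv_comp_const_mul hg,
    iteratedDeriv_comp_const_mul hshift, iteratedDeriv_comp_sub_const]
  ring

theorem averageStep_eq_zero (hg : ∀ x ≤ 0, g x = 0) {x : ℝ} (hx : x ≤ 0) :
    averageStep g x = 0 := by
  rw [averageStep, integral_congr (g := fun _ => 0) fun u hu => hg u ?_, integral_zero]
  rw [uIcc_of_le (by linarith)] at hu
  linarith [hu.2]

theorem averageStep_eq_one (hg : ∀ x, 1 ≤ x → g x = 1) {x : ℝ} (hx : 1 ≤ x) :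
    averageStep g x = 1 := by
  rw [averageStep, integral_congr (g := fun _ => 1) fun u hu => hg u ?_, integral_const]
  · simp
  rw [uIcc_of_le (by linarith)] at hu
  linarith [hu.1]

theorem averageStep_mem_Icc (hg : Continuous g) (hg01 : ∀ x, g x ∈ Icc 0 1) (x : ℝ) :
    averageStep g x ∈ Icc 0 1 := by
  have hle : 2 * x - 1 ≤ 2 * x := by linarith
  refine ⟨integral_nonneg hle fun u _ => (hg01 u).1, ?_⟩
  calc averageStep g x ≤ ∫ _ in (2 * x - 1)..(2 * x), (1 : ℝ) :=
        integral_mono_on hle (hg.intervalIntegrable _ _) intervalIntegrable_const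
          fun u _ => (hg01 u).2
    _ = 1 := by simp

end averageStep

theorem succ_mul_succ_add_one_div_two (j : ℕ) :
    (j + 1) * (j + 1 + 1) / 2 = (j + 1) + j * (j + 1) / 2 := by
  rw [show (j + 1) * (j + 1 + 1) = j * (j + 1) + 2 * (j + 1) by ring,
    Nat.add_mul_div_left _ _ two_pos, add_comm]

structure IsSharpStep (k : ℕ) (g : ℝ → ℝ) : Prop where
  contDiff : ContDiff ℝ k g
  eq_zero : ∀ x ≤ 0, g x = 0
  eq_one : ∀ x, 1 ≤ x → g x = 1
  mem_Icc : ∀ x, g x ∈ Icc 0 1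
  abs_iteratedDeriv_le : ∀ j ≤ k, ∀ x, |iteratedDeriv j g x| ≤ 2 ^ (j * (j + 1) / 2)
  iteratedDeriv_inv_two_pow : ∀ j ≤ k, iteratedDeriv j g (2⁻¹ ^ j) = 2 ^ (j * (j + 1) / 2)

namespace IsSharpStep

variable {k j : ℕ} {g : ℝ → ℝ}

theorem iteratedDeriv_eq_zero_of_nonpos (h : IsSharpStep k g) (hj : j ≤ k) {x : ℝ}
    (hx : x ≤ 0) : iteratedDeriv j g x = 0 := by
  rcases eq_or_ne j 0 with rfl | hj₀
  · exact h.eq_zero x hx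
  refine iteratedDeriv_eq_zero_on_closure_of_eqOn_const h.contDiff hj₀ (by exact_mod_cast hj)
    isOpen_Iio (fun y hy => h.eq_zero y (le_of_lt hy)) ?_
  rwa [closure_Iio]

theorem iteratedDeriv_eq_zero_of_one_le (h : IsSharpStep k g) (hj₀ : j ≠ 0) (hj : j ≤ k) {x : ℝ}
    (hx : 1 ≤ x) : iteratedDeriv j g x = 0 :=
  iteratedDeriv_eq_zero_on_closure_of_eqOn_const h.contDiff hj₀ (by exact_mod_cast hj)
    isOpen_Ioi (fun y hy => h.eq_one y (le_of_lt hy)) (by rwa [closure_Ioi])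

theorem abs_iteratedDeriv_sub_le (h : IsSharpStep k g) (hj : j ≤ k) (x : ℝ) :
    |iteratedDeriv j g (2 * x) - iteratedDeriv j g (2 * x - 1)| ≤ 2 ^ (j * (j + 1) / 2) := by
  rcases le_or_gt x 2⁻¹ with hx | hx
  · rw [h.iteratedDeriv_eq_zero_of_nonpos (x := 2 * x - 1) hj (by linarith), sub_zero]
    exact h.abs_iteratedDeriv_le j hj _
  rcases eq_or_ne j 0 with rfl | hj₀
  · have := h.mem_Icc (2 * x - 1)
    simp only [iteratedDeriv_zero, h.eq_one _ (by linarith : 1 ≤ 2 * x)]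
    rw [abs_le]
    constructor <;> linarith [this.1, this.2]
  · rw [h.iteratedDeriv_eq_zero_of_one_le hj₀ hj (by linarith), zero_sub, abs_neg]
    exact h.abs_iteratedDeriv_le j hj _

theorem averageStep (h : IsSharpStep k g) : IsSharpStep (k + 1) (averageStep g) where
  contDiff := h.contDiff.averageStep
  eq_zero _ := averageStep_eq_zero h.eq_zero
  eq_one _ := averageStep_eq_one h.eq_one
  mem_Icc := averageStep_mem_Icc h.contDiff.continuous h.mem_Icc
  abs_iteratedDeriv_le
    | 0, _, x => by
      have := averageStep_mem_Icc h.contDiff.continuous h.mem_Icc x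
      rw [iteratedDeriv_zero, pow_zero, abs_le]
      constructor <;> linarith [this.1, this.2]
    | j + 1, hj, x => by
      have hjk : j ≤ k := by omega
      rw [iteratedDeriv_succ_averageStep (h.contDiff.of_le (by exact_mod_cast hjk)), abs_mul,
        abs_pow, abs_two, succ_mul_succ_add_one_div_two, pow_add (2 : ℝ) (j + 1)]
      exact mul_le_mul_of_nonneg_left (h.abs_iteratedDeriv_sub_le hjk x) (by positivity)
  iteratedDeriv_inv_two_pow
    | 0, _ => by simpa using averageStep_eq_one h.eq_one le_rfl
    | j + 1, hj => by
      have hjk : j ≤ k := by omega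
      have hpt : 2 * (2⁻¹ : ℝ) ^ (j + 1) = 2⁻¹ ^ j := by ring
      rw [iteratedDeriv_succ_averageStep (h.contDiff.of_le (by exact_mod_cast hjk)), hpt,
        h.iteratedDeriv_eq_zero_of_nonpos (x := 2⁻¹ ^ j - 1) hjk
          (by linarith [pow_le_one₀ (n := j) (by norm_num) (by norm_num : (2⁻¹ : ℝ) ≤ 1)]),
        h.iteratedDeriv_inv_two_pow j hjk, sub_zero, succ_mul_succ_add_one_div_two,
        pow_add (2 : ℝ) (j + 1)]

theorem isGreatest_abs_iteratedDeriv (h : IsSharpStep k g) (hj : j ≤ k) :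
    IsGreatest (range fun x => |iteratedDeriv j g x|) (2 ^ (j * (j + 1) / 2)) :=
  ⟨⟨2⁻¹ ^ j, by simp only [h.iteratedDeriv_inv_two_pow j hj, abs_pow, abs_two]⟩,
    forall_mem_range.2 (h.abs_iteratedDeriv_le j hj)⟩

end IsSharpStep

noncomputable def ramp (x : ℝ) : ℝ := max 0 (min x 1)

theorem isSharpStep_ramp : IsSharpStep 0 ramp where
  contDiff := contDiff_zero.2 (by unfold ramp; fun_prop)
  eq_zero x hx := by simp [ramp, hx, hx.trans zero_le_one]
  eq_one x hx := by simp [ramp, hx]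
  mem_Icc x := ⟨le_max_left _ _, max_le zero_le_one (min_le_right _ _)⟩
  abs_iteratedDeriv_le
    | 0, _, x => by simp [ramp, abs_le]
  iteratedDeriv_inv_two_pow
    | 0, _ => by simp [ramp]

theorem isSharpStep_averageStep_iterate_ramp (k : ℕ) : IsSharpStep k (averageStep^[k] ramp) := by
  induction k with
  | zero => exact isSharpStep_ramp
  | succ k ih => simpa only [Function.iterate_succ_apply'] using ih.averageStep

/-- there is a `C⁶` function `g : ℝ → ℝ` equal to `0` on `(-∞, 0]`, equal to
`1` on `[1, ∞)`, with values in `[0,1]`, and whose `j`-th derivative has supremum norm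
exactly `2^{j(j+1)/2}` for every `0 ≤ j ≤ 6`. -/
theorem stmt6 :
    ∃ g : ℝ → ℝ, ContDiff ℝ 6 g ∧
      (∀ x : ℝ, x ≤ 0 → g x = 0) ∧
      (∀ x : ℝ, 1 ≤ x → g x = 1) ∧
      (∀ x : ℝ, g x ∈ Set.Icc (0 : ℝ) 1) ∧
      ∀ j : ℕ, j ≤ 6 →
        BddAbove (Set.range fun x : ℝ => |iteratedDeriv j g x|) ∧
        (⨆ x : ℝ, |iteratedDeriv j g x|) = 2 ^ (j * (j + 1) / 2) := by
  have h := isSharpStep_averageStep_iterate_ramp 6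
  refine ⟨_, h.contDiff, h.eq_zero, h.eq_one, h.mem_Icc, fun j hj => ?_⟩
  have hmax := h.isGreatest_abs_iteratedDeriv hj
  exact ⟨hmax.bddAbove, hmax.isLUB.ciSup_eq⟩
end

section
/- Let N be a positive integer and let f : U(N) → ℝ be a continuous function satisfying f(αX) = f(X) for every X ∈ U(N) and every complex number α with |α| = 1. Then for every X ∈ U(N), ∫ f(YX) dν_{SU(N)}(Y) = ∫ f(U) dν_{U(N)}(U), where ν_{SU(N)} and ν_{U(N)} are the Haar probability measures on SU(N) and U(N) respectively. -/
open MeasureTheory Matrix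

noncomputable section

/-- `ν` is the Haar probability measure on the special unitary group `SU(N)`, viewed as a
measure on matrix space: a probability measure giving full mass to `SU(N)` and invariant
under left translation by elements of `SU(N)`. -/
def IsHaarSpecialUnitary {m : Type*} [Fintype m] [DecidableEq m]
    (ν : Measure (Matrix m m ℂ)) : Prop :=
  IsProbabilityMeasure ν ∧
    ν (Matrix.specialUnitaryGroup m ℂ : Set (Matrix m m ℂ)) = 1 ∧
    ∀ V ∈ Matrix.specialUnitaryGroup m ℂ, Measure.map (fun W => V * W) ν = ν

end

/-!
Since `ν` is left-invariant under `SU(N)` and `SU(N)` is closed under adjoints, the image of `ν`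
under `Y ↦ Yᴴ` is a right-invariant probability measure on `SU(N)`; computing the measure of
`{(g, h) | g h ∈ A}` for the product of the two measures in both orders shows that it equals `ν`,
so `ν` is right-invariant as well. Every unitary `U` is `α • Z` with `|α| = 1` and `Z ∈ SU(N)`
(take `α` an `N`-th root of `det U`), so by the scalar invariance of `f` the function
`U ↦ ∫ f(YU) dν(Y)` is constant on `U(N)`. Averaging it against `μ` and swapping the integrals,
left-invariance of `μ` under `SU(N)` identifies the average with `∫ f dμ`.
-/

namespace MeasureTheory.Measure

variable {M : Type*} [MeasurableSpace M]

section Mul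

variable [Mul M] [MeasurableMul₂ M]

theorem eq_of_map_mul_left_eq_of_map_mul_right_eq {S : Set M} {ν ρ : Measure M}
    [IsProbabilityMeasure ν] [IsProbabilityMeasure ρ]
    (hνS : ∀ᵐ x ∂ν, x ∈ S) (hρS : ∀ᵐ x ∂ρ, x ∈ S)
    (hν : ∀ g ∈ S, ν.map (g * ·) = ν) (hρ : ∀ g ∈ S, ρ.map (· * g) = ρ) : ν = ρ := by
  ext A hA
  have hmul : MeasurableSet {p : M × M | p.1 * p.2 ∈ A} := measurable_mul hA
  calc ν A = ∫⁻ _, ν A ∂ρ := by simp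
    _ = ∫⁻ g, ν (Prod.mk g ⁻¹' {p | p.1 * p.2 ∈ A}) ∂ρ := by
      refine lintegral_congr_ae ?_
      filter_upwards [hρS] with g hg
      change ν A = ν ((g * ·) ⁻¹' A)
      rw [← map_apply (measurable_const_mul g) hA, hν g hg]
    _ = ∫⁻ h, ρ ((·, h) ⁻¹' {p | p.1 * p.2 ∈ A}) ∂ν := by
      rw [← prod_apply hmul, prod_apply_symm hmul]
    _ = ∫⁻ _, ρ A ∂ν := by
      refine lintegral_congr_ae ?_
      filter_upwards [hνS] with h hh
      change ρ ((· * h) ⁻¹' A) = ρ A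
      rw [← map_apply (measurable_mul_const h) hA, hρ h hh]
    _ = ρ A := by simp

theorem integral_eq_integral_integral_mul {S : Set M} {ν μ : Measure M}
    [IsProbabilityMeasure ν] [SFinite μ] (hνS : ∀ᵐ y ∂ν, y ∈ S)
    (hμ : ∀ g ∈ S, μ.map (g * ·) = μ) {f : M → ℝ} (hfμ : AEStronglyMeasurable f μ)
    (hf : Integrable (fun p : M × M => f (p.1 * p.2)) (ν.prod μ)) :
    ∫ x, f x ∂μ = ∫ x, ∫ y, f (y * x) ∂ν ∂μ := by
  calc ∫ x, f x ∂μ = ∫ _, ∫ x, f x ∂μ ∂ν := by simp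
    _ = ∫ y, ∫ x, f (y * x) ∂μ ∂ν := by
      refine integral_congr_ae ?_
      filter_upwards [hνS] with y hy
      rw [← integral_map (measurable_const_mul y).aemeasurable ((hμ y hy).symm ▸ hfμ),
        hμ y hy]
    _ = ∫ x, ∫ y, f (y * x) ∂ν ∂μ := integral_integral_swap hf

end Mul

theorem map_mul_right_eq_self_of_map_mul_left_eq_self [Monoid M] [StarMul M]
    [MeasurableMul₂ M] (hstar : Measurable (star : M → M)) {S : Set M} (hS : MeasurableSet S)
    (hSstar : ∀ x ∈ S, star x ∈ S) {ν : Measure M} [IsProbabilityMeasure ν]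
    (hνS : ∀ᵐ x ∂ν, x ∈ S) (hν : ∀ g ∈ S, ν.map (g * ·) = ν) :
    ∀ g ∈ S, ν.map (· * g) = ν := by
  set ρ := ν.map star
  have : IsProbabilityMeasure ρ := isProbabilityMeasure_map hstar.aemeasurable
  have hρ : ∀ g ∈ S, ρ.map (· * g) = ρ := by
    intro g hg
    have : (· * g) ∘ star = star ∘ (star g * ·) := funext fun x => by simp [star_mul]
    rw [map_map (measurable_mul_const g) hstar, this,
      ← map_map hstar (measurable_const_mul _), hν _ (hSstar g hg)]
  have hρS : ∀ᵐ x ∂ρ, x ∈ S := (ae_map_iff hstar.aemeasurable hS).2 (hνS.mono hSstar)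
  rwa [eq_of_map_mul_left_eq_of_map_mul_right_eq hνS hρS hν hρ]

end MeasureTheory.Measure

theorem ContinuousOn.integrable_of_ae_mem {X : Type*} [TopologicalSpace X] [T2Space X]
    [MeasurableSpace X] [OpensMeasurableSpace X] {f : X → ℝ} {K : Set X} (hf : ContinuousOn f K)
    (hK : IsCompact K) {μ : Measure X} [IsFiniteMeasure μ] (hμK : ∀ᵐ x ∂μ, x ∈ K) :
    Integrable f μ := by
  simpa [IntegrableOn, Measure.restrict_eq_self_of_ae_mem hμK] using
    hf.integrableOn_compact (μ := μ) hK

namespace Matrix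

variable {n : Type*} [Fintype n] [DecidableEq n]

instance instBorelSpace : BorelSpace (Matrix n n ℂ) := Pi.borelSpace

instance instSecondCountableTopology : SecondCountableTopology (Matrix n n ℂ) :=
  inferInstanceAs (SecondCountableTopology (n → n → ℂ))

theorem isCompact_unitaryGroup {𝕜 : Type*} [RCLike 𝕜] :
    IsCompact (unitaryGroup n 𝕜 : Set (Matrix n n 𝕜)) := by
  have hball : IsCompact (Set.univ.pi fun _ : n => Set.univ.pi fun _ : n =>
      Metric.closedBall (0 : 𝕜) 1) :=
    isCompact_univ_pi fun _ => isCompact_univ_pi fun _ => isCompact_closedBall 0 1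
  refine hball.of_isClosed_subset (isClosed_unitary (R := Matrix n n 𝕜)) fun U hU i _ j _ => ?_
  simpa using entry_norm_bound_of_unitary hU i j

theorem isCompact_specialUnitaryGroup {𝕜 : Type*} [RCLike 𝕜] :
    IsCompact (specialUnitaryGroup n 𝕜 : Set (Matrix n n 𝕜)) :=
  isCompact_unitaryGroup.inter_right (isClosed_eq continuous_id.matrix_det continuous_const)

theorem exists_eq_smul_of_mem_unitaryGroup {U : Matrix n n ℂ} (hU : U ∈ unitaryGroup n ℂ) :
    ∃ α : ℂ, ‖α‖ = 1 ∧ ∃ Z ∈ specialUnitaryGroup n ℂ, U = α • Z := by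
  rcases isEmpty_or_nonempty n with hn | hn
  · exact ⟨1, norm_one, U, mem_specialUnitaryGroup_iff.2 ⟨hU, det_isEmpty⟩, (one_smul _ _).symm⟩
  obtain ⟨α, hα⟩ := IsAlgClosed.exists_pow_nat_eq U.det (Fintype.card_pos (α := n))
  have hdet : ‖U.det‖ = 1 := CStarRing.norm_of_mem_unitary (det_of_mem_unitary hU)
  have hα1 : ‖α‖ = 1 := by
    rwa [← pow_eq_one_iff_of_nonneg (norm_nonneg α) (Fintype.card_ne_zero (α := n)), ← norm_pow,
      hα]
  have hα0 : α ≠ 0 := norm_ne_zero_iff.1 (hα1 ▸ one_ne_zero)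
  refine ⟨α, hα1, α⁻¹ • U, mem_specialUnitaryGroup_iff.2 ⟨?_, ?_⟩, by rw [smul_inv_smul₀ hα0]⟩
  · refine Unitary.smul_mem_of_mem ?_ hU
    rw [Unitary.mem_iff_star_mul_self, RCLike.star_def, RCLike.conj_mul, norm_inv, hα1]
    simp
  · rw [det_smul, inv_pow, hα, inv_mul_cancel₀ (norm_ne_zero_iff.1 (hdet ▸ one_ne_zero))]

end Matrix

section HaarIntegrals

open Matrix

variable {n : Type*} [Fintype n] [DecidableEq n]

theorem IsHaarSpecialUnitary.ae_mem {ν : Measure (Matrix n n ℂ)} (hν : IsHaarSpecialUnitary ν) :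
    ∀ᵐ Y ∂ν, Y ∈ specialUnitaryGroup n ℂ :=
  have := hν.1
  (mem_ae_iff_prob_eq_one isCompact_specialUnitaryGroup.measurableSet).2 hν.2.1

theorem IsHaarUnitary.ae_mem {μ : Measure (Matrix n n ℂ)} (hμ : IsHaarUnitary μ) :
    ∀ᵐ U ∂μ, U ∈ unitaryGroup n ℂ :=
  have := hμ.1
  (mem_ae_iff_prob_eq_one isCompact_unitaryGroup.measurableSet).2 hμ.2.1

theorem IsHaarSpecialUnitary.map_mul_right_eq_self {ν : Measure (Matrix n n ℂ)}
    (hν : IsHaarSpecialUnitary ν) {Z : Matrix n n ℂ} (hZ : Z ∈ specialUnitaryGroup n ℂ) :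
    ν.map (· * Z) = ν :=
  have := hν.1
  Measure.map_mul_right_eq_self_of_map_mul_left_eq_self continuous_star.measurable
    isCompact_specialUnitaryGroup.measurableSet
    (fun x hx => (star ⟨x, hx⟩ : specialUnitaryGroup n ℂ).2) hν.ae_mem hν.2.2 Z hZ

theorem IsHaarSpecialUnitary.integral_comp_mul_right {ν : Measure (Matrix n n ℂ)}
    (hν : IsHaarSpecialUnitary ν) {f : Matrix n n ℂ → ℝ}
    (hf : ContinuousOn f (unitaryGroup n ℂ : Set (Matrix n n ℂ)))
    (hscal : ∀ X ∈ unitaryGroup n ℂ, ∀ α : ℂ, ‖α‖ = 1 → f (α • X) = f X)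
    {U : Matrix n n ℂ} (hU : U ∈ unitaryGroup n ℂ) :
    ∫ Y, f (Y * U) ∂ν = ∫ Y, f Y ∂ν := by
  have := hν.1
  obtain ⟨α, hα, Z, hZ, rfl⟩ := exists_eq_smul_of_mem_unitaryGroup hU
  have hZU : Z ∈ unitaryGroup n ℂ := specialUnitaryGroup_le_unitaryGroup hZ
  have hfν : AEStronglyMeasurable f ν :=
    (hf.integrable_of_ae_mem isCompact_unitaryGroup
      (hν.ae_mem.mono fun _ hY => specialUnitaryGroup_le_unitaryGroup hY)).1
  calc ∫ Y, f (Y * α • Z) ∂ν = ∫ Y, f (Y * Z) ∂ν := by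
        refine integral_congr_ae ?_
        filter_upwards [hν.ae_mem] with Y hY
        rw [mul_smul_comm, hscal _ (mul_mem (specialUnitaryGroup_le_unitaryGroup hY) hZU) α hα]
    _ = ∫ Y, f Y ∂ν := by
        rw [← integral_map (measurable_mul_const Z).aemeasurable
          ((hν.map_mul_right_eq_self hZ).symm ▸ hfν), hν.map_mul_right_eq_self hZ]

end HaarIntegrals

theorem stmt10_general (N : ℕ)
    (f : Matrix (Fin N) (Fin N) ℂ → ℝ)
    (hf : ContinuousOn f (Matrix.unitaryGroup (Fin N) ℂ : Set (Matrix (Fin N) (Fin N) ℂ)))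
    (hscal : ∀ X ∈ Matrix.unitaryGroup (Fin N) ℂ, ∀ α : ℂ, ‖α‖ = 1 → f (α • X) = f X)
    (ν μ : Measure (Matrix (Fin N) (Fin N) ℂ))
    (hν : IsHaarSpecialUnitary ν) (hμ : IsHaarUnitary μ) :
    ∀ X ∈ Matrix.unitaryGroup (Fin N) ℂ,
      ∫ Y, f (Y * X) ∂ν = ∫ U, f U ∂μ := by
  intro X hX
  have := hν.1
  have := hμ.1
  have hSU := Matrix.specialUnitaryGroup_le_unitaryGroup (n := Fin N) (α := ℂ)
  have hfμ : Integrable f μ :=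
    hf.integrable_of_ae_mem Matrix.isCompact_unitaryGroup hμ.ae_mem
  have hfprod : Integrable (fun p => f (p.1 * p.2)) (ν.prod μ) :=
    (hf.comp continuous_mul.continuousOn fun p hp =>
      mul_mem (hSU hp.1) hp.2).integrable_of_ae_mem
      (Matrix.isCompact_specialUnitaryGroup.prod Matrix.isCompact_unitaryGroup)
      ((Measure.quasiMeasurePreserving_fst.ae hν.ae_mem).and
        (Measure.quasiMeasurePreserving_snd.ae hμ.ae_mem))
  calc ∫ Y, f (Y * X) ∂ν = ∫ _, ∫ Y, f Y ∂ν ∂μ := by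
        rw [hν.integral_comp_mul_right hf hscal hX, integral_const, probReal_univ, one_smul]
    _ = ∫ U, ∫ Y, f (Y * U) ∂ν ∂μ :=
        integral_congr_ae <|
          hμ.ae_mem.mono fun U hU => (hν.integral_comp_mul_right hf hscal hU).symm
    _ = ∫ U, f U ∂μ :=
        (Measure.integral_eq_integral_integral_mul hν.ae_mem (fun g hg => hμ.2.2 g (hSU hg))
          hfμ.1 hfprod).symm

/-- if `f` is a continuous function on `U(N)` with `f(αX) = f(X)` for every
unimodular scalar `α`, then for every unitary `X`, `∫ f(YX) dν_{SU(N)}(Y) = ∫ f dν_{U(N)}`. -/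
theorem stmt10 (N : ℕ) (hN : 0 < N)
    (f : Matrix (Fin N) (Fin N) ℂ → ℝ)
    (hf : ContinuousOn f (Matrix.unitaryGroup (Fin N) ℂ : Set (Matrix (Fin N) (Fin N) ℂ)))
    (hscal : ∀ X ∈ Matrix.unitaryGroup (Fin N) ℂ, ∀ α : ℂ, ‖α‖ = 1 → f (α • X) = f X)
    (ν μ : Measure (Matrix (Fin N) (Fin N) ℂ))
    (hν : IsHaarSpecialUnitary ν) (hμ : IsHaarUnitary μ) :
    ∀ X ∈ Matrix.unitaryGroup (Fin N) ℂ,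
      ∫ Y, f (Y * X) ∂ν = ∫ U, f U ∂μ :=
  stmt10_general N f hf hscal ν μ hν hμ
end

section
/- Let k be a positive integer, let 0 < ε ≤ e^{-1}, and let A, B ∈ D_k be density matrices with ‖A − B‖₂ ≤ ε. Then | H(A) − H(B) | ≤ 3kε|ln(ε)|, where H(X) = −tr(X ln X) is the von Neumann entropy. -/
/-!
Let `U`, `V` be eigenbases of `A`, `B` and `W = U⋆V`. Then `U⋆(A - B)V` has entries
`(λᵢ - μⱼ) Wᵢⱼ`, so `‖A - B‖₂² = ∑ᵢⱼ |Wᵢⱼ|² (λᵢ - μⱼ)²`. Since `W` is unitary, `(|Wᵢⱼ|²)` is doubly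
stochastic, and by Birkhoff's theorem this linear function of it is at least its value at some
permutation matrix: there is `σ` with `∑ᵢ (λᵢ - μ_{σ i})² ≤ ‖A - B‖₂²` (Hoffman–Wielandt), hence
`|λᵢ - μ_{σ i}| ≤ ε` for every `i`. On `[0, 1]`, moving `t` by at most `ε ≤ e⁻¹` changes `-t ln t`
by at most `-ε ln ε`, and summing over the `k` matched pairs gives `|H(A) - H(B)| ≤ k ε |ln ε|`.
-/

open scoped ComplexOrder
open Matrix

namespace Real

lemma negMulLog_add_le {x y : ℝ} (hx : 0 ≤ x) (hy : 0 ≤ y) :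
    negMulLog (x + y) ≤ negMulLog x + negMulLog y := by
  rcases hx.eq_or_lt with rfl | hx
  · simp
  rcases hy.eq_or_lt with rfl | hy
  · simp
  have hlx : log x ≤ log (x + y) := log_le_log hx (by linarith)
  have hly : log y ≤ log (x + y) := log_le_log hy (by linarith)
  simp only [negMulLog, neg_mul]
  nlinarith

lemma negMulLog_sub_negMulLog_add_le {x d : ℝ} (hx : 0 ≤ x) (hd : 0 ≤ d) (hxd : x + d ≤ 1) :
    negMulLog x - negMulLog (x + d) ≤ d := by
  rcases hx.eq_or_lt with rfl | hx
  · simp only [zero_add, negMulLog_zero]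
    linarith [negMulLog_nonneg hd (by linarith)]
  have hlog : log (x + d) - log x ≤ d / x := by
    rw [← log_div (by positivity) hx.ne']
    linarith [log_le_sub_one_of_pos (show 0 < (x + d) / x by positivity), add_div x d x,
      div_self hx.ne']
  have hx' : x * (log (x + d) - log x) ≤ d := by
    calc x * (log (x + d) - log x) ≤ x * (d / x) := by gcongr
      _ = d := by field_simp
  have hd' : d * log (x + d) ≤ 0 := mul_nonpos_of_nonneg_of_nonpos hd (log_nonpos (by linarith) hxd)
  simp only [negMulLog, neg_mul]
  nlinarith

lemma monotoneOn_negMulLog : MonotoneOn negMulLog (Set.Icc 0 (exp (-1))) := by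
  refine monotoneOn_of_deriv_nonneg (convex_Icc _ _) continuous_negMulLog.continuousOn
    (differentiableOn_negMulLog.mono fun x hx => ?_) fun x hx => ?_
  · rw [interior_Icc] at hx
    exact hx.1.ne'
  · rw [interior_Icc] at hx
    rw [deriv_negMulLog hx.1.ne']
    have : log x < -1 := (log_lt_iff_lt_exp hx.1).2 hx.2
    linarith

lemma self_le_negMulLog {ε : ℝ} (hε : 0 < ε) (hε1 : ε ≤ exp (-1)) : ε ≤ negMulLog ε := by
  have : log ε ≤ -1 := (log_le_iff_le_exp hε).2 hε1
  simp only [negMulLog, neg_mul]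
  nlinarith

lemma abs_negMulLog_sub_negMulLog_le {x y ε : ℝ} (hx : x ∈ Set.Icc (0 : ℝ) 1)
    (hy : y ∈ Set.Icc (0 : ℝ) 1) (hε : 0 < ε) (hε1 : ε ≤ exp (-1)) (hxy : |x - y| ≤ ε) :
    |negMulLog x - negMulLog y| ≤ negMulLog ε := by
  wlog hle : x ≤ y generalizing x y
  · rw [abs_sub_comm] at hxy ⊢
    exact this hy hx hxy (le_of_not_ge hle)
  obtain ⟨d, hd, rfl⟩ : ∃ d, 0 ≤ d ∧ y = x + d := ⟨y - x, by linarith, by ring⟩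
  have hdε : d ≤ ε := by rw [abs_sub_comm] at hxy; simpa [abs_of_nonneg hd] using hxy
  rw [abs_le]
  constructor
  · have hsubadd := negMulLog_add_le hx.1 hd
    have hmono := monotoneOn_negMulLog ⟨hd, hdε.trans hε1⟩ ⟨hε.le, hε1⟩ hdε
    linarith
  · have hslope := negMulLog_sub_negMulLog_add_le hx.1 hd hy.2
    have hε_le := self_le_negMulLog hε hε1
    linarith

end Real

namespace Matrix

variable {m n 𝕜 : Type*} [Fintype m] [Fintype n] [RCLike 𝕜]

lemma trace_conjTranspose_mul_self_eq_sum_norm_sq (M : Matrix m n 𝕜) :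
    (Mᴴ * M).trace = ((∑ i, ∑ j, ‖M i j‖ ^ 2 : ℝ) : 𝕜) := by
  rw [Finset.sum_comm]
  simp [trace, mul_apply, RCLike.conj_mul]

lemma trace_conjTranspose_mul_self_unitary_mul_mul {R : Type*} [CommRing R] [StarRing R]
    [DecidableEq m] [DecidableEq n] {U : Matrix m m R} {V : Matrix n n R}
    (hU : U ∈ unitaryGroup m R) (hV : V ∈ unitaryGroup n R) (M : Matrix m n R) :
    ((U * M * V)ᴴ * (U * M * V)).trace = (Mᴴ * M).trace := by
  have hU' : Uᴴ * U = 1 := mem_unitaryGroup_iff'.mp hU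
  have hV' : V * Vᴴ = 1 := mem_unitaryGroup_iff.mp hV
  calc ((U * M * V)ᴴ * (U * M * V)).trace = (Vᴴ * (Mᴴ * M * V)).trace := by
        simp only [conjTranspose_mul, Matrix.mul_assoc]
        rw [← Matrix.mul_assoc Uᴴ, hU', Matrix.one_mul]
    _ = (Mᴴ * M * V * Vᴴ).trace := trace_mul_comm _ _
    _ = (Mᴴ * M).trace := by rw [Matrix.mul_assoc _ V, hV', Matrix.mul_one]

lemma of_norm_sq_mem_doublyStochastic [DecidableEq n] {U : Matrix n n 𝕜}
    (hU : U ∈ unitaryGroup n 𝕜) :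
    of (fun i j => ‖U i j‖ ^ 2) ∈ doublyStochastic ℝ n := by
  have hrow (W : Matrix n n 𝕜) (hW : W * Wᴴ = 1) (i : n) : ∑ j, ‖W i j‖ ^ 2 = 1 := by
    have hii : (W * Wᴴ) i i = ((∑ j, ‖W i j‖ ^ 2 : ℝ) : 𝕜) := by
      simp [mul_apply, RCLike.mul_conj]
    rw [hW, one_apply_eq] at hii
    exact_mod_cast hii.symm
  refine mem_doublyStochastic_iff_sum.2
    ⟨fun i j => sq_nonneg _, hrow U (mem_unitaryGroup_iff.mp hU), fun j => ?_⟩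
  simpa using hrow Uᴴ (by rw [conjTranspose_conjTranspose]; exact mem_unitaryGroup_iff'.mp hU) j

lemma exists_perm_sum_le_of_mem_doublyStochastic {R : Type*} [Field R] [LinearOrder R]
    [IsStrictOrderedRing R] [DecidableEq n] {M : Matrix n n R} (hM : M ∈ doublyStochastic R n)
    (c : n → n → R) : ∃ σ : Equiv.Perm n, ∑ i, c i (σ i) ≤ ∑ i, ∑ j, c i j * M i j := by
  let f : Matrix n n R →ₗ[R] R := ∑ i, ∑ j, c i j • entryLinearMap R R i j
  rw [← SetLike.mem_coe, doublyStochastic_eq_convexHull_permMatrix] at hM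
  obtain ⟨_, ⟨σ, rfl⟩, hσ⟩ :=
    (f.concaveOn convex_univ).exists_le_of_mem_convexHull (Set.subset_univ _) hM
  refine ⟨σ, ?_⟩
  simpa [f, Equiv.Perm.permMatrix, PEquiv.toMatrix_apply] using hσ

lemma star_mul_sub_mul_apply_of_diagonal [DecidableEq n] {U V A B : Matrix n n 𝕜}
    (hU : U ∈ unitaryGroup n 𝕜) (hV : V ∈ unitaryGroup n 𝕜) {a b : n → 𝕜}
    (hA : star U * A * U = diagonal a) (hB : star V * B * V = diagonal b) (i j : n) :
    (star U * (A - B) * V) i j = (a i - b j) * (star U * V) i j := by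
  have hUA : star U * A = diagonal a * star U := by
    rw [← hA, Matrix.mul_assoc _ U, mem_unitaryGroup_iff.mp hU, Matrix.mul_one]
  have hBV : B * V = V * diagonal b := by
    rw [← hB, ← Matrix.mul_assoc, ← Matrix.mul_assoc, mem_unitaryGroup_iff.mp hV, Matrix.one_mul]
  have hsplit : star U * (A - B) * V = diagonal a * (star U * V) - star U * V * diagonal b := by
    rw [Matrix.mul_sub, Matrix.sub_mul, hUA, Matrix.mul_assoc _ B, hBV]
    simp only [Matrix.mul_assoc]
  rw [hsplit, sub_apply, diagonal_mul, mul_diagonal]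
  ring

namespace IsHermitian

variable [DecidableEq n] {A B : Matrix n n 𝕜}

lemma star_eigenvectorUnitary_mul_mul_eigenvectorUnitary (hA : A.IsHermitian) :
    (star hA.eigenvectorUnitary : Matrix n n 𝕜) * A * (hA.eigenvectorUnitary : Matrix n n 𝕜) =
      diagonal (RCLike.ofReal ∘ hA.eigenvalues) := by
  simpa [Unitary.conjStarAlgAut_star_apply] using hA.conjStarAlgAut_star_eigenvectorUnitary

theorem exists_perm_sum_sq_eigenvalues_sub_le (hA : A.IsHermitian) (hB : B.IsHermitian) :
    ∃ σ : Equiv.Perm n, ∑ i, (hA.eigenvalues i - hB.eigenvalues (σ i)) ^ 2 ≤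
      RCLike.re ((A - B)ᴴ * (A - B)).trace := by
  have hU := Unitary.star_mem hA.eigenvectorUnitary.2
  have hV := hB.eigenvectorUnitary.2
  obtain ⟨σ, hσ⟩ := exists_perm_sum_le_of_mem_doublyStochastic
    (of_norm_sq_mem_doublyStochastic (mul_mem hU hV))
    fun i j => (hA.eigenvalues i - hB.eigenvalues j) ^ 2
  refine ⟨σ, hσ.trans_eq ?_⟩
  rw [← trace_conjTranspose_mul_self_unitary_mul_mul hU hV (A - B),
    trace_conjTranspose_mul_self_eq_sum_norm_sq, RCLike.ofReal_re]
  simp only [star_mul_sub_mul_apply_of_diagonal hA.eigenvectorUnitary.2 hV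
    hA.star_eigenvectorUnitary_mul_mul_eigenvectorUnitary
    hB.star_eigenvectorUnitary_mul_mul_eigenvectorUnitary, of_apply, Function.comp_apply,
    ← RCLike.ofReal_sub, norm_mul, RCLike.norm_ofReal, mul_pow, sq_abs]

end IsHermitian

lemma PosSemidef.eigenvalues_le_re_trace [DecidableEq n] {A : Matrix n n 𝕜} (hA : A.PosSemidef)
    (i : n) : hA.1.eigenvalues i ≤ RCLike.re A.trace := by
  rw [hA.1.trace_eq_sum_eigenvalues, ← RCLike.ofReal_sum, RCLike.ofReal_re]
  exact Finset.single_le_sum (fun j _ => hA.eigenvalues_nonneg j) (Finset.mem_univ i)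

end Matrix

section Density

variable {n : Type*} [Fintype n] [DecidableEq n]

lemma IsDensity.eigenvalues_mem_Icc {A : Matrix n n ℂ} (hA : IsDensity A) (i : n) :
    hA.1.1.eigenvalues i ∈ Set.Icc 0 1 :=
  ⟨hA.1.eigenvalues_nonneg i, by simpa [hA.2] using hA.1.eigenvalues_le_re_trace i⟩

lemma Matrix.IsHermitian.exists_perm_abs_eigenvalues_sub_le_frob {A B : Matrix n n ℂ}
    (hA : A.IsHermitian) (hB : B.IsHermitian) :
    ∃ σ : Equiv.Perm n, ∀ i, |hA.eigenvalues i - hB.eigenvalues (σ i)| ≤ frob (A - B) := by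
  obtain ⟨σ, hσ⟩ := hA.exists_perm_sum_sq_eigenvalues_sub_le hB
  refine ⟨σ, fun i => ?_⟩
  rw [frob, ← Real.sqrt_sq_eq_abs]
  exact Real.sqrt_le_sqrt
    ((Finset.single_le_sum (f := fun j => (hA.eigenvalues j - hB.eigenvalues (σ j)) ^ 2)
      (fun j _ => sq_nonneg _) (Finset.mem_univ i)).trans hσ)

lemma vnEntropy_eq_sum_negMulLog {A : Matrix n n ℂ} (hA : A.IsHermitian) :
    vnEntropy A = ∑ i, Real.negMulLog (hA.eigenvalues i) := by
  simp [vnEntropy, hA, Real.negMulLog]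

theorem abs_vnEntropy_sub_le {A B : Matrix n n ℂ} (hA : IsDensity A) (hB : IsDensity B) {ε : ℝ}
    (hε : 0 < ε) (hε1 : ε ≤ Real.exp (-1)) (hAB : frob (A - B) ≤ ε) :
    |vnEntropy A - vnEntropy B| ≤ Fintype.card n * Real.negMulLog ε := by
  obtain ⟨σ, hσ⟩ := hA.1.1.exists_perm_abs_eigenvalues_sub_le_frob hB.1.1
  rw [vnEntropy_eq_sum_negMulLog hA.1.1, vnEntropy_eq_sum_negMulLog hB.1.1,
    ← Equiv.sum_comp σ fun j => Real.negMulLog (hB.1.1.eigenvalues j), ← Finset.sum_sub_distrib]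
  calc |∑ i, (Real.negMulLog (hA.1.1.eigenvalues i) - Real.negMulLog (hB.1.1.eigenvalues (σ i)))|
      ≤ ∑ i, |Real.negMulLog (hA.1.1.eigenvalues i) - Real.negMulLog (hB.1.1.eigenvalues (σ i))| :=
        Finset.abs_sum_le_sum_abs _ _
    _ ≤ ∑ _i : n, Real.negMulLog ε := Finset.sum_le_sum fun i _ =>
        Real.abs_negMulLog_sub_negMulLog_le (hA.eigenvalues_mem_Icc i)
          (hB.eigenvalues_mem_Icc (σ i)) hε hε1 ((hσ i).trans hAB)
    _ = Fintype.card n * Real.negMulLog ε := by simp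

end Density

theorem stmt13_general (k : ℕ) (ε : ℝ) (hε : 0 < ε) (hε1 : ε ≤ Real.exp (-1))
    (A B : Matrix (Fin k) (Fin k) ℂ) (hA : IsDensity A) (hB : IsDensity B)
    (hAB : frob (A - B) ≤ ε) :
    |vnEntropy A - vnEntropy B| ≤ 3 * k * ε * |Real.log ε| := by
  have hlog : Real.log ε ≤ 0 :=
    Real.log_nonpos hε.le (hε1.trans (Real.exp_le_one_iff.2 (by norm_num)))
  have hbound : 0 ≤ (k : ℝ) * ε * |Real.log ε| := by positivity
  calc |vnEntropy A - vnEntropy B| ≤ k * Real.negMulLog ε := by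
        simpa using abs_vnEntropy_sub_le hA hB hε hε1 hAB
    _ = k * ε * |Real.log ε| := by rw [Real.negMulLog, abs_of_nonpos hlog]; ring
    _ ≤ 3 * k * ε * |Real.log ε| := by linarith

/-- Lipschitz-type continuity of the von Neumann entropy.  For density
matrices `A, B` of size `k` with `‖A - B‖₂ ≤ ε` and `0 < ε ≤ e⁻¹`, one has
`|H(A) - H(B)| ≤ 3kε|ln ε|`. -/
theorem stmt13 (k : ℕ) (hk : 0 < k) (ε : ℝ) (hε : 0 < ε) (hε1 : ε ≤ Real.exp (-1))
    (A B : Matrix (Fin k) (Fin k) ℂ) (hA : IsDensity A) (hB : IsDensity B)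
    (hAB : frob (A - B) ≤ ε) :
    |vnEntropy A - vnEntropy B| ≤ 3 * k * ε * |Real.log ε| :=
  stmt13_general k ε hε hε1 A B hA hB hAB
end

section
/- Let m ≥ 2 be an integer and let X ∈ D_m be a density matrix with largest eigenvalue λ. Then H(X) ≤ −λ ln(λ) − (1−λ) ln( (1−λ)/(m−1) ), i.e. the von Neumann entropy of X is at most the entropy of the probability vector (λ, (1−λ)/(m−1), …, (1−λ)/(m−1)). -/
open scoped ComplexOrder
open Matrix

/-! The eigenvalues of a density matrix form a probability vector whose Shannon entropy
`∑ negMulLog λᵢ` is `H(X)`. Split off the eigenvalue `λ`; by concavity of `negMulLog` (Jensen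
with uniform weights) the remaining `m - 1` eigenvalues, of total mass `1 - λ`, contribute at
most as much as `m - 1` copies of their average `(1 - λ)/(m - 1)`. -/

open Real Finset

theorem mul_negMulLog_div (c s : ℝ) : c * negMulLog (s / c) = -(s * log (s / c)) := by
  rcases eq_or_ne c 0 with rfl | hc
  · simp
  · rw [negMulLog]; field_simp

theorem sum_negMulLog_le_card_mul_negMulLog_div {ι : Type*} (s : Finset ι) (p : ι → ℝ)
    (hp : ∀ i ∈ s, 0 ≤ p i) :
    ∑ i ∈ s, negMulLog (p i) ≤ #s * negMulLog ((∑ i ∈ s, p i) / #s) := by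
  rcases s.eq_empty_or_nonempty with rfl | hs
  · simp
  have hcard : (0 : ℝ) < #s := by exact_mod_cast hs.card_pos
  have hjensen : ∑ i ∈ s, (#s : ℝ)⁻¹ • negMulLog (p i) ≤
      negMulLog (∑ i ∈ s, (#s : ℝ)⁻¹ • p i) :=
    concaveOn_negMulLog.le_map_sum (fun _ _ ↦ by positivity)
      (by simp [hcard.ne']) hp
  rw [← smul_sum, ← smul_sum, smul_eq_mul, smul_eq_mul, inv_mul_eq_div, inv_mul_eq_div,
    div_le_iff₀' hcard] at hjensen
  exact hjensen

theorem sum_negMulLog_le_of_sum_eq_one {ι : Type*} [Fintype ι] [DecidableEq ι] (p : ι → ℝ)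
    (hp : ∀ i, 0 ≤ p i) (hsum : ∑ i, p i = 1) (i₀ : ι) :
    ∑ i, negMulLog (p i) ≤
      negMulLog (p i₀) - (1 - p i₀) * log ((1 - p i₀) / (Fintype.card ι - 1)) := by
  have hrest : ∑ i ∈ univ.erase i₀, p i = 1 - p i₀ := by
    rw [← hsum, ← add_sum_erase univ p (mem_univ i₀), add_sub_cancel_left]
  have hcard : (#(univ.erase i₀) : ℝ) = Fintype.card ι - 1 := by
    rw [card_erase_of_mem (mem_univ i₀), card_univ,
      Nat.cast_pred (Fintype.card_pos_iff.2 ⟨i₀⟩)]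
  calc ∑ i, negMulLog (p i) = negMulLog (p i₀) + ∑ i ∈ univ.erase i₀, negMulLog (p i) :=
        (add_sum_erase univ _ (mem_univ i₀)).symm
    _ ≤ negMulLog (p i₀) + #(univ.erase i₀) * negMulLog ((1 - p i₀) / #(univ.erase i₀)) := by
        gcongr
        rw [← hrest]
        exact sum_negMulLog_le_card_mul_negMulLog_div _ p fun i _ ↦ hp i
    _ = _ := by rw [mul_negMulLog_div, hcard]; ring

theorem Matrix.IsHermitian.vnEntropy_eq {n : Type*} [Fintype n] [DecidableEq n]
    {A : Matrix n n ℂ} (hA : A.IsHermitian) :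
    vnEntropy A = ∑ i, negMulLog (hA.eigenvalues i) := by
  simp [vnEntropy, hA, negMulLog]

theorem IsDensity.sum_eigenvalues {n : Type*} [Fintype n] [DecidableEq n]
    {X : Matrix n n ℂ} (hX : IsDensity X) : ∑ i, hX.1.isHermitian.eigenvalues i = 1 := by
  have h := hX.2.symm.trans hX.1.isHermitian.trace_eq_sum_eigenvalues
  rw [← RCLike.ofReal_sum, eq_comm] at h
  exact Complex.ofReal_eq_one.mp h

theorem stmt14_general (m : ℕ) (X : Matrix (Fin m) (Fin m) ℂ) (hX : IsDensity X)
    (lam : ℝ) (hlam : IsGreatest (Set.range hX.1.isHermitian.eigenvalues) lam) :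
    vnEntropy X ≤ -(lam * Real.log lam) - (1 - lam) * Real.log ((1 - lam) / (m - 1)) := by
  obtain ⟨i₀, rfl⟩ := hlam.1
  calc vnEntropy X = ∑ i, negMulLog (hX.1.isHermitian.eigenvalues i) :=
        hX.1.isHermitian.vnEntropy_eq
    _ ≤ _ := sum_negMulLog_le_of_sum_eq_one _ hX.1.eigenvalues_nonneg hX.sum_eigenvalues i₀
    _ = _ := by rw [Fintype.card_fin, negMulLog, neg_mul]

/-- if `X` is a density matrix of size `m ≥ 2` with largest eigenvalue `λ`,
then `H(X) ≤ -λ ln λ - (1-λ) ln((1-λ)/(m-1))`. -/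
theorem stmt14 (m : ℕ) (hm : 2 ≤ m) (X : Matrix (Fin m) (Fin m) ℂ) (hX : IsDensity X)
    (lam : ℝ) (hlam : IsGreatest (Set.range hX.1.isHermitian.eigenvalues) lam) :
    vnEntropy X ≤ -(lam * Real.log lam) - (1 - lam) * Real.log ((1 - lam) / (m - 1)) :=
  stmt14_general m X hX lam hlam
end
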